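/- arXiv:1111.6413 — 2 statements merged into one kernel-verified Lean document; each statement's English description precedes it below -/
import Mathlib

section
/- Let I be the category of finite sets 𝐧 = {1,…,n} and injections, let k ≥ 1, and let P_k : (⊔^k ↓ I) → I^k be the projection functor from the comma category of the k-fold concatenation functor ⊔^k : I^k → I. Then for every object (𝐧₁,…,𝐧ₖ) of I^k, the comma category ((𝐧₁,…,𝐧ₖ) ↓ P_k) has an initial object. Consequently P_k is a final functor. -/
open CategoryTheory

/-- Objects of the category `I`: the finite sets `𝐧 = {1,…,n}`, encoded by their size. -/
structure IObj : Type where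
  n : ℕ

/-- The category `I` of finite sets and injections. -/
instance : Category IObj where
  Hom a b := Fin a.n ↪ Fin b.n
  id a := Function.Embedding.refl _
  comp f g := f.trans g
  id_comp _ := rfl
  comp_id _ := rfl
  assoc _ _ _ := rfl

/-- Concatenation of injections. -/
def concatMap {m m' n n' : ℕ} (f : Fin m ↪ Fin m') (g : Fin n ↪ Fin n') :
    Fin (m + n) ↪ Fin (m' + n') where
  toFun x :=
    if h : (x : ℕ) < m then ⟨(f ⟨x, h⟩ : ℕ), by have := (f ⟨x, h⟩).isLt; omega⟩
    else ⟨m' + (g ⟨(x : ℕ) - m, by omega⟩ : ℕ), by have := (g ⟨(x : ℕ) - m, by omega⟩).isLt; omega⟩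
  inj' := by
    intro a b hab
    have hv := congrArg Fin.val hab
    by_cases h1 : (a : ℕ) < m <;> by_cases h2 : (b : ℕ) < m <;>
      simp only [h1, h2, dif_pos, dif_neg, not_false_iff] at hv
    · have h3 : f ⟨(a : ℕ), h1⟩ = f ⟨(b : ℕ), h2⟩ := Fin.ext hv
      have h4 := congrArg Fin.val (f.injective h3)
      exact Fin.ext h4
    · exact absurd hv (by have := (f ⟨(a : ℕ), h1⟩).isLt; omega)
    · exact absurd hv (by have := (f ⟨(b : ℕ), h2⟩).isLt; omega)
    · have hg : (g ⟨(a : ℕ) - m, by omega⟩ : ℕ) = (g ⟨(b : ℕ) - m, by omega⟩ : ℕ) := by omega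
      have h4 := congrArg Fin.val (g.injective (Fin.ext hg))
      simp only at h4
      exact Fin.ext (by omega)

lemma concatMap_val_lt {m m' n n' : ℕ} (f : Fin m ↪ Fin m') (g : Fin n ↪ Fin n')
    (x : Fin (m + n)) (h : (x : ℕ) < m) :
    ((concatMap f g) x : ℕ) = (f ⟨(x : ℕ), h⟩ : ℕ) := by
  simp only [concatMap, Function.Embedding.coeFn_mk, dif_pos h]
  exact congrArg Fin.val (dif_pos h)

lemma concatMap_val_ge {m m' n n' : ℕ} (f : Fin m ↪ Fin m') (g : Fin n ↪ Fin n')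
    (x : Fin (m + n)) (h : ¬ (x : ℕ) < m) :
    ((concatMap f g) x : ℕ) = m' + (g ⟨(x : ℕ) - m, by omega⟩ : ℕ) := by
  simp only [concatMap, Function.Embedding.coeFn_mk, dif_neg h]
  exact congrArg Fin.val (dif_neg h)

/-- View a morphism of `I` as an embedding. -/
abbrev toEmb {a b : IObj} (f : a ⟶ b) : Fin a.n ↪ Fin b.n := f

/-- The concatenation (symmetric monoidal) functor `⊔ : I × I → I`. -/
def concatF : IObj × IObj ⥤ IObj where
  obj p := ⟨p.1.n + p.2.n⟩
  map {p q} f := concatMap f.1 f.2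
  map_id := by
    intro p
    apply Function.Embedding.ext
    intro x
    apply Fin.ext
    have hx : (x : ℕ) < p.1.n + p.2.n := x.isLt
    change ((concatMap (Function.Embedding.refl (Fin p.1.n))
      (Function.Embedding.refl (Fin p.2.n))) x : ℕ) = (x : ℕ)
    by_cases h : (x : ℕ) < p.1.n
    · rw [concatMap_val_lt _ _ _ h]; rfl
    · rw [concatMap_val_ge _ _ _ h]
      have h5 : (Function.Embedding.refl (Fin p.2.n) ⟨(x : ℕ) - p.1.n, by omega⟩ : ℕ)
          = (x : ℕ) - p.1.n := rfl
      omega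
  map_comp := by
    intro p q r f g
    obtain ⟨f1, f2⟩ := f
    obtain ⟨g1, g2⟩ := g
    apply Function.Embedding.ext
    intro x
    apply Fin.ext
    have hx : (x : ℕ) < p.1.n + p.2.n := x.isLt
    change ((concatMap ((toEmb f1).trans (toEmb g1)) ((toEmb f2).trans (toEmb g2))) x : ℕ)
      = ((concatMap (toEmb g1) (toEmb g2)) ((concatMap (toEmb f1) (toEmb f2)) x) : ℕ)
    by_cases h : (x : ℕ) < p.1.n
    · rw [concatMap_val_lt _ _ _ h]
      have hy := concatMap_val_lt (toEmb f1) (toEmb f2) x h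
      have hcond : ((concatMap (toEmb f1) (toEmb f2)) x : ℕ) < q.1.n := by
        rw [hy]; exact ((toEmb f1) ⟨(x : ℕ), h⟩).isLt
      rw [concatMap_val_lt (toEmb g1) (toEmb g2) _ hcond]
      have harg : (⟨((concatMap (toEmb f1) (toEmb f2)) x : ℕ), hcond⟩ : Fin q.1.n)
          = (toEmb f1) ⟨(x : ℕ), h⟩ := Fin.ext hy
      exact (congrArg (fun z : Fin q.1.n => ((toEmb g1) z : ℕ)) harg).symm
    · rw [concatMap_val_ge _ _ _ h]
      have hy := concatMap_val_ge (toEmb f1) (toEmb f2) x h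
      have hcond : ¬ ((concatMap (toEmb f1) (toEmb f2)) x : ℕ) < q.1.n := by omega
      rw [concatMap_val_ge (toEmb g1) (toEmb g2) _ hcond]
      have harg : (⟨((concatMap (toEmb f1) (toEmb f2)) x : ℕ) - q.1.n, by omega⟩ : Fin q.2.n)
          = (toEmb f2) ⟨(x : ℕ) - p.1.n, by omega⟩ := Fin.ext (by
            show ((concatMap (toEmb f1) (toEmb f2)) x : ℕ) - q.1.n
              = ((toEmb f2) ⟨(x : ℕ) - p.1.n, by omega⟩ : ℕ)
            omega)
      exact (congrArg (fun z : Fin q.2.n => r.1.n + ((toEmb g2) z : ℕ)) harg).symm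

/-- The external product of two `I`-diagrams of sets. -/
@[simps]
def extProd (X Y : IObj ⥤ Type) : IObj × IObj ⥤ Type where
  obj p := X.obj p.1 × Y.obj p.2
  map f := TypeCat.ofHom (fun a => (X.map f.1 a.1, Y.map f.2 a.2))
  map_id := by intro p; ext a <;> simp
  map_comp := by intro p q r f g; ext a <;> simp

/-- Day convolution `X ⊠ Y` of `I`-diagrams of sets: the left Kan extension of the
external product along concatenation. -/
noncomputable def dayConv (X Y : IObj ⥤ Type) : IObj ⥤ Type :=
  (Functor.lan concatF).obj (extProd X Y)

lemma concatMap_refl (m n : ℕ) :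
    concatMap (Function.Embedding.refl (Fin m)) (Function.Embedding.refl (Fin n))
      = Function.Embedding.refl (Fin (m + n)) := by
  apply Function.Embedding.ext
  intro x
  apply Fin.ext
  have hx : (x : ℕ) < m + n := x.isLt
  by_cases h : (x : ℕ) < m
  · rw [concatMap_val_lt _ _ _ h]; rfl
  · rw [concatMap_val_ge _ _ _ h]
    have h5 : (Function.Embedding.refl (Fin n) ⟨(x : ℕ) - m, by omega⟩ : ℕ)
        = (x : ℕ) - m := rfl
    show m + (Function.Embedding.refl (Fin n) ⟨(x : ℕ) - m, by omega⟩ : ℕ) = (x : ℕ)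
    omega

lemma concatMap_trans {m m' m'' n n' n'' : ℕ}
    (f1 : Fin m ↪ Fin m') (g1 : Fin m' ↪ Fin m'')
    (f2 : Fin n ↪ Fin n') (g2 : Fin n' ↪ Fin n'') :
    concatMap (f1.trans g1) (f2.trans g2)
      = (concatMap f1 f2).trans (concatMap g1 g2) := by
  apply Function.Embedding.ext
  intro x
  apply Fin.ext
  have hx : (x : ℕ) < m + n := x.isLt
  show ((concatMap (f1.trans g1) (f2.trans g2)) x : ℕ)
    = ((concatMap g1 g2) ((concatMap f1 f2) x) : ℕ)
  by_cases h : (x : ℕ) < m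
  · rw [concatMap_val_lt _ _ _ h]
    have hy := concatMap_val_lt f1 f2 x h
    have hcond : ((concatMap f1 f2) x : ℕ) < m' := by
      rw [hy]; exact (f1 ⟨(x : ℕ), h⟩).isLt
    rw [concatMap_val_lt g1 g2 _ hcond]
    have harg : (⟨((concatMap f1 f2) x : ℕ), hcond⟩ : Fin m') = f1 ⟨(x : ℕ), h⟩ :=
      Fin.ext hy
    exact (congrArg (fun z : Fin m' => ((g1 z) : ℕ)) harg).symm
  · rw [concatMap_val_ge _ _ _ h]
    have hy := concatMap_val_ge f1 f2 x h
    have hcond : ¬ ((concatMap f1 f2) x : ℕ) < m' := by omega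
    rw [concatMap_val_ge g1 g2 _ hcond]
    have harg : (⟨((concatMap f1 f2) x : ℕ) - m', by omega⟩ : Fin n')
        = f2 ⟨(x : ℕ) - m, by omega⟩ := Fin.ext (by
          show ((concatMap f1 f2) x : ℕ) - m' = (f2 ⟨(x : ℕ) - m, by omega⟩ : ℕ)
          omega)
    exact (congrArg (fun z : Fin n' => m'' + ((g2 z) : ℕ)) harg).symm

/-- The `k`-fold concatenation functor `⊔^k : I^k → I`. -/
def concatK : (k : ℕ) → ((Fin k → IObj) ⥤ IObj)
  | 0 => (Functor.const _).obj ⟨0⟩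
  | (k + 1) =>
    { obj := fun x => ⟨(x 0).n + ((concatK k).obj (fun i : Fin k => x i.succ)).n⟩
      map := fun {x y} f =>
        concatMap (toEmb (f 0)) (toEmb ((concatK k).map (fun i : Fin k => f i.succ)))
      map_id := by
        intro x
        have h : (concatK k).map (fun i : Fin k => (𝟙 x : x ⟶ x) i.succ)
            = 𝟙 ((concatK k).obj (fun i : Fin k => x i.succ)) :=
          (concatK k).map_id (fun i : Fin k => x i.succ)
        show concatMap (toEmb ((𝟙 x : x ⟶ x) 0))
            (toEmb ((concatK k).map (fun i : Fin k => (𝟙 x : x ⟶ x) i.succ))) = _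
        rw [h]
        exact concatMap_refl _ _
      map_comp := by
        intro x y z f g
        have h : (concatK k).map (fun i : Fin k => (f ≫ g : x ⟶ z) i.succ)
            = (concatK k).map (fun i : Fin k => f i.succ) ≫
                (concatK k).map (fun i : Fin k => g i.succ) :=
          (concatK k).map_comp (fun i : Fin k => f i.succ) (fun i : Fin k => g i.succ)
        show concatMap (toEmb ((f ≫ g : x ⟶ z) 0))
            (toEmb ((concatK k).map (fun i : Fin k => (f ≫ g : x ⟶ z) i.succ))) = _
        rw [h]
        exact concatMap_trans _ _ _ _ }

/-!
`P_k` has a left adjoint, sending `(𝐧₁,…,𝐧ₖ)` to `((𝐧₁,…,𝐧ₖ), id)`; this works for the comma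
category `L ↓ 𝟭` of any functor `L`. The initial objects of `(d ↓ P_k)` are the units of this
adjunction, and right adjoints are final.
-/

namespace CategoryTheory.Comma

universe v₁ v₂ u₁ u₂

variable {C : Type u₁} {D : Type u₂} [Category.{v₁} C] [Category.{v₂} D] (L : C ⥤ D)

-- An `abbrev`, so that `((fstIdLeftAdjoint L).obj c).left` is reducibly `c` and `simp` can
-- compose morphisms out of it.
abbrev fstIdLeftAdjoint : C ⥤ Comma L (𝟭 D) where
  obj c := ⟨c, L.obj c, 𝟙 _⟩
  map f := ⟨f, L.map f, by simp⟩

def fstIdAdjunction : fstIdLeftAdjoint L ⊣ fst L (𝟭 D) :=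
  Adjunction.mkOfHomEquiv
    { homEquiv c X :=
        { toFun g := g.left
          invFun f := ⟨f, L.map f ≫ X.hom, by simp⟩
          left_inv g := by ext <;> simp
          right_inv _ := rfl } }

end CategoryTheory.Comma

open Limits in
theorem projection_comma_initial_and_final_general (k : ℕ) :
    (∀ d : Fin k → IObj,
        HasInitial (StructuredArrow d (Comma.fst (concatK k) (𝟭 IObj)))) ∧
      (Comma.fst (concatK k) (𝟭 IObj)).Final :=
  ⟨fun d => (mkInitialOfLeftAdjoint _ (Comma.fstIdAdjunction (concatK k)) d).hasInitial,
    Functor.final_of_adjunction (Comma.fstIdAdjunction (concatK k))⟩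

open Limits in
/-- for `k ≥ 1`, each comma category `((𝐧₁,…,𝐧ₖ) ↓ P_k)` of the projection
`P_k : (⊔^k ↓ I) → I^k` has an initial object; consequently `P_k` is a final functor. -/
theorem projection_comma_initial_and_final (k : ℕ) (hk : 1 ≤ k) :
    (∀ d : Fin k → IObj,
        HasInitial (StructuredArrow d (Comma.fst (concatK k) (𝟭 IObj)))) ∧
      (Comma.fst (concatK k) (𝟭 IObj)).Final :=
  projection_comma_initial_and_final_general k
end

section
/- Let X : I → Set be an I-diagram of sets such that every morphism 𝐦 → 𝐧 of I induces an injection X(𝐦) → X(𝐧), and such that for all l, m, n ≥ 0, in the commutative square induced by the order-preserving inclusions 𝐦 → 𝐦⊔𝐧, 𝐦 → 𝐥⊔𝐦, 𝐦⊔𝐧 → 𝐥⊔𝐦⊔𝐧, 𝐥⊔𝐦 → 𝐥⊔𝐦⊔𝐧, the intersection (inside X(𝐥⊔𝐦⊔𝐧)) of the images of X(𝐥⊔𝐦) and X(𝐦⊔𝐧) equals the image of X(𝐦). Then for every n the latching map L_𝐧(X) → X(𝐧) is injective, where L_𝐧(X) = colim over the non-isomorphisms 𝐦 → 𝐧 of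 X(𝐦). -/
open CategoryTheory

/-- The order-preserving inclusion `𝐦 → 𝐦⊔𝐧`. -/
def inclHomA (m n : ℕ) : (⟨m⟩ : IObj) ⟶ ⟨m + n⟩ :=
  ⟨fun s => ⟨(s : ℕ), by have hs : (s : ℕ) < m := s.isLt; show (s : ℕ) < m + n; omega⟩,
    fun s t h => Fin.ext (by
      have := congrArg Fin.val h; simpa using this)⟩

/-- The order-preserving inclusion `𝐦 → 𝐥⊔𝐦`. -/
def inclHomB (l m : ℕ) : (⟨m⟩ : IObj) ⟶ ⟨l + m⟩ :=
  ⟨fun s => ⟨l + (s : ℕ), by have hs : (s : ℕ) < m := s.isLt; show l + (s : ℕ) < l + m; omega⟩,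
    fun s t h => Fin.ext (by
      have := congrArg Fin.val h; simp at this; omega)⟩

/-- The order-preserving inclusion `𝐦⊔𝐧 → 𝐥⊔𝐦⊔𝐧`. -/
def inclHomC (l m n : ℕ) : (⟨m + n⟩ : IObj) ⟶ ⟨l + m + n⟩ :=
  ⟨fun s => ⟨l + (s : ℕ), by
      have hs : (s : ℕ) < m + n := s.isLt; show l + (s : ℕ) < l + m + n; omega⟩,
    fun s t h => Fin.ext (by
      have := congrArg Fin.val h; simp at this; omega)⟩

/-- The order-preserving inclusion `𝐥⊔𝐦 → 𝐥⊔𝐦⊔𝐧`. -/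
def inclHomD (l m n : ℕ) : (⟨l + m⟩ : IObj) ⟶ ⟨l + m + n⟩ :=
  ⟨fun s => ⟨(s : ℕ), by
      have hs : (s : ℕ) < l + m := s.isLt; show (s : ℕ) < l + m + n; omega⟩,
    fun s t h => Fin.ext (by
      have := congrArg Fin.val h; simpa using this)⟩

/-- The full subcategory of `(I ↓ 𝐧)` on the non-isomorphisms. -/
abbrev boundaryOver (a : IObj) :=
  ObjectProperty.FullSubcategory (fun f : Over a => ¬ IsIso f.hom)

/-- The latching object `L_𝐧(X)`, a colimit over the non-isomorphisms `𝐦 → 𝐧`. -/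
noncomputable def latchingObj (X : IObj ⥤ Type) (a : IObj) : Type :=
  Limits.colimit
    (ObjectProperty.ι (fun f : Over a => ¬ IsIso f.hom) ⋙ Over.forget a ⋙ X)

/-- The latching map `L_𝐧(X) → X(𝐧)`. -/
noncomputable def latchingMap (X : IObj ⥤ Type) (a : IObj) :
    latchingObj X a → X.obj a :=
  Limits.colimit.desc
    (ObjectProperty.ι (fun f : Over a => ¬ IsIso f.hom) ⋙ Over.forget a ⋙ X)
    { pt := X.obj a
      ι :=
        { app := fun f => X.map f.obj.hom
          naturality := by
            intro f g u
            ext z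
            have hw : u.hom.left ≫ g.obj.hom = f.obj.hom := Over.w u.hom
            show X.map g.obj.hom (X.map u.hom.left z) = X.map f.obj.hom z
            rw [← hw, Functor.map_comp]; rfl } }

/-!
Represent two elements of the latching object by `x ∈ X(𝐩)` over `f : 𝐩 → 𝐧` and `y ∈ X(𝐪)`
over `g : 𝐪 → 𝐧`, and suppose `X f x = X g y`. Enumerating the images of `f` and `g` as three
blocks `im f \ im g`, `im f ∩ im g`, `im g \ im f`, one injection `j : 𝐥⊔𝐦⊔𝐤 → 𝐧` shows that, up
to isomorphisms of the sources, `f` and `g` are the inclusions of `𝐥⊔𝐦` and `𝐦⊔𝐤` followed by `j`.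
Since `X j` is injective, the intersection condition yields `w ∈ X(𝐦)` restricting to `x` and `y`,
so both representatives equal that of `w` over the non-isomorphism `𝐦 → 𝐧`.
-/

theorem Fin.range_append {α : Type*} {m n : ℕ} (a : Fin m → α) (b : Fin n → α) :
    Set.range (Fin.append a b) = Set.range a ∪ Set.range b := by
  ext x
  constructor
  · rintro ⟨i, rfl⟩
    induction i using Fin.addCases <;> simp
  · rintro (⟨i, rfl⟩ | ⟨i, rfl⟩)
    exacts [⟨Fin.castAdd n i, Fin.append_left a b i⟩, ⟨Fin.natAdd m i, Fin.append_right a b i⟩]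

theorem Finset.exists_fin_embedding_range_eq {α : Type*} (s : Finset α) :
    ∃ e : Fin s.card ↪ α, Set.range e = s :=
  ⟨s.equivFin.symm.toEmbedding.trans (Function.Embedding.subtype _), by
    rw [Function.Embedding.coe_trans, Set.range_comp, Equiv.coe_toEmbedding,
      s.equivFin.symm.surjective.range_eq, Set.image_univ, Function.Embedding.coe_subtype,
      Subtype.range_coe_subtype]; rfl⟩

theorem Function.Embedding.exists_equiv_of_range_eq {α β γ : Type*} (f : β ↪ α) (e : γ ↪ α)
    (h : Set.range f = Set.range e) : ∃ σ : β ≃ γ, ∀ s, e (σ s) = f s :=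
  ⟨(Equiv.ofInjective f f.injective).trans
      ((Equiv.setCongr h).trans (Equiv.ofInjective e e.injective).symm),
    fun s => by simp [Equiv.apply_ofInjective_symm]⟩

theorem exists_three_block_embedding {α : Type*} [DecidableEq α] (A B : Finset α) :
    ∃ (l m k : ℕ) (j : Fin (l + m + k) ↪ α),
      Set.range (fun s => j (Fin.castAdd k s)) = A ∧
      Set.range (fun s => j (Fin.cast (Nat.add_assoc l m k).symm (Fin.natAdd l s))) = B := by
  obtain ⟨eL, hL⟩ := (A \ B).exists_fin_embedding_range_eq
  obtain ⟨eM, hM⟩ := (A ∩ B).exists_fin_embedding_range_eq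
  obtain ⟨eK, hK⟩ := (B \ A).exists_fin_embedding_range_eq
  have hLM : Disjoint (Set.range eL) (Set.range eM) := by
    rw [hL, hM, Finset.disjoint_coe]; exact Finset.disjoint_sdiff_inter A B
  have hLM_range : Set.range (Fin.Embedding.append hLM) = A := by
    rw [Fin.Embedding.coe_append, Fin.range_append, hL, hM, ← Finset.coe_union,
      Finset.sdiff_union_inter]
  have hMK_range : Set.range (Fin.append eM eK) = B := by
    rw [Fin.range_append, hM, hK, ← Finset.coe_union, Finset.union_comm, Finset.inter_comm,
      Finset.sdiff_union_inter]
  have hLMK : Disjoint (Set.range (Fin.Embedding.append hLM)) (Set.range eK) := by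
    rw [hLM_range, hK, Finset.disjoint_coe]; exact Finset.disjoint_sdiff
  refine ⟨_, _, _, Fin.Embedding.append hLMK, ?_, ?_⟩
  · simpa using hLM_range
  · simpa [Fin.append_assoc] using hMK_range

namespace IObj

variable {a b : IObj}

theorem hom_ext {f g : a ⟶ b} (h : ∀ s, toEmb f s = toEmb g s) : f = g :=
  Function.Embedding.ext h

def isoOfEquiv (e : Fin a.n ≃ Fin b.n) : a ≅ b where
  hom := e.toEmbedding
  inv := e.symm.toEmbedding
  hom_inv_id := Function.Embedding.ext e.symm_apply_apply
  inv_hom_id := Function.Embedding.ext e.apply_symm_apply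

theorem n_le_of_hom (f : a ⟶ b) : a.n ≤ b.n := by
  simpa using Fintype.card_le_of_embedding (toEmb f)

theorem not_isIso_iff_lt (f : a ⟶ b) : ¬ IsIso f ↔ a.n < b.n := by
  refine ⟨fun hf => (n_le_of_hom f).lt_of_ne fun h => hf ?_,
    fun h _ => h.not_ge (n_le_of_hom (inv f))⟩
  have hbij : Function.Bijective (toEmb f) :=
    (Fintype.bijective_iff_injective_and_card _).2 ⟨(toEmb f).injective, by simp [h]⟩
  exact (isoOfEquiv (Equiv.ofBijective _ hbij)).isIso_hom

end IObj

theorem inclHomB_comp_inclHomD (l m n : ℕ) :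
    inclHomB l m ≫ inclHomD l m n = inclHomA m n ≫ inclHomC l m n :=
  rfl

theorem exists_factorization_through_inclHomD_inclHomC {P Q a : IObj} (f : P ⟶ a) (g : Q ⟶ a) :
    ∃ (l m k : ℕ) (j : (⟨l + m + k⟩ : IObj) ⟶ a) (σ : P ≅ ⟨l + m⟩) (τ : Q ≅ ⟨m + k⟩),
      f = σ.hom ≫ inclHomD l m k ≫ j ∧ g = τ.hom ≫ inclHomC l m k ≫ j := by
  classical
  obtain ⟨l, m, k, j, hA, hB⟩ := exists_three_block_embedding
    (Set.range (toEmb f)).toFinset (Set.range (toEmb g)).toFinset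
  rw [Set.coe_toFinset] at hA hB
  obtain ⟨σ, hσ⟩ := (toEmb f).exists_equiv_of_range_eq (toEmb (inclHomD l m k ≫ j)) hA.symm
  obtain ⟨τ, hτ⟩ := (toEmb g).exists_equiv_of_range_eq (toEmb (inclHomC l m k ≫ j)) hB.symm
  exact ⟨l, m, k, j, IObj.isoOfEquiv σ, IObj.isoOfEquiv τ,
    IObj.hom_ext fun s => (hσ s).symm, IObj.hom_ext fun s => (hτ s).symm⟩

section

variable (X : IObj ⥤ Type)

theorem exists_common_preimage_of_map_inclHomD_eq {l m k : ℕ}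
    (hD : Function.Injective (X.map (inclHomD l m k)))
    (hC : Function.Injective (X.map (inclHomC l m k)))
    (hDC : Set.range (X.map (inclHomD l m k)) ∩ Set.range (X.map (inclHomC l m k)) =
      Set.range (X.map (inclHomB l m ≫ inclHomD l m k)))
    {x : X.obj ⟨l + m⟩} {y : X.obj ⟨m + k⟩}
    (h : X.map (inclHomD l m k) x = X.map (inclHomC l m k) y) :
    ∃ w, X.map (inclHomB l m) w = x ∧ X.map (inclHomA m k) w = y := by
  obtain ⟨w, hw⟩ : X.map (inclHomD l m k) x ∈ Set.range (X.map (inclHomB l m ≫ inclHomD l m k)) :=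
    hDC ▸ ⟨⟨x, rfl⟩, ⟨y, h.symm⟩⟩
  refine ⟨w, hD (by rwa [← X.map_comp_apply]), hC ?_⟩
  rw [← X.map_comp_apply, ← inclHomB_comp_inclHomD, hw, h]

theorem exists_span_of_map_eq (h1 : ∀ (a b : IObj) (f : a ⟶ b), Function.Injective (X.map f))
    (h2 : ∀ l m n : ℕ,
      Set.range (X.map (inclHomD l m n)) ∩ Set.range (X.map (inclHomC l m n)) =
        Set.range (X.map (inclHomB l m ≫ inclHomD l m n)))
    {P Q a : IObj} (f : P ⟶ a) (g : Q ⟶ a) {x : X.obj P} {y : X.obj Q}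
    (h : X.map f x = X.map g y) :
    ∃ (M : IObj) (u : M ⟶ P) (v : M ⟶ Q) (w : X.obj M),
      u ≫ f = v ≫ g ∧ X.map u w = x ∧ X.map v w = y := by
  obtain ⟨l, m, k, j, σ, τ, rfl, rfl⟩ := exists_factorization_through_inclHomD_inclHomC f g
  have hj : X.map (inclHomD l m k) (X.map σ.hom x) = X.map (inclHomC l m k) (X.map τ.hom y) :=
    h1 _ _ j (by simpa only [Functor.map_comp_apply] using h)
  obtain ⟨w, hx, hy⟩ :=
    exists_common_preimage_of_map_inclHomD_eq X (h1 _ _ _) (h1 _ _ _) (h2 l m k) hj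
  refine ⟨⟨m⟩, inclHomB l m ≫ σ.inv, inclHomA m k ≫ τ.inv, w, ?_, ?_, ?_⟩
  · simp only [Category.assoc, Iso.inv_hom_id_assoc, reassoc_of% inclHomB_comp_inclHomD]
  · rw [X.map_comp_apply, hx, ← X.map_comp_apply, σ.hom_inv_id, X.map_id_apply]
  · rw [X.map_comp_apply, hy, ← X.map_comp_apply, τ.hom_inv_id, X.map_id_apply]

theorem latchingMap_ι (a : IObj) (f : boundaryOver a) (x : X.obj f.obj.left) :
    latchingMap X a
      (Limits.colimit.ι (ObjectProperty.ι (fun f : Over a => ¬ IsIso f.hom) ⋙ Over.forget a ⋙ X)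
        f x) = X.map f.obj.hom x :=
  Limits.colimit.ι_desc_apply
    (F := ObjectProperty.ι (fun f : Over a => ¬ IsIso f.hom) ⋙ Over.forget a ⋙ X) _ _ x

end

/-- if `X : I → Set` takes all morphisms to injections and satisfies the
intersection-of-images ("flatness") condition, then all latching maps `L_𝐧(X) → X(𝐧)`
are injective. -/
theorem latching_map_injective (X : IObj ⥤ Type)
    (h1 : ∀ (a b : IObj) (f : a ⟶ b), Function.Injective (X.map f))
    (h2 : ∀ l m n : ℕ,
      Set.range (X.map (inclHomD l m n)) ∩ Set.range (X.map (inclHomC l m n)) =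
        Set.range (X.map (inclHomB l m ≫ inclHomD l m n))) :
    ∀ a : IObj, Function.Injective (latchingMap X a) := by
  intro a z₁ z₂ hz
  obtain ⟨f, x, rfl⟩ := Limits.Types.jointly_surjective' z₁
  obtain ⟨g, y, rfl⟩ := Limits.Types.jointly_surjective' z₂
  obtain ⟨M, u, v, w, huv, rfl, rfl⟩ := exists_span_of_map_eq X h1 h2 f.obj.hom g.obj.hom
    ((latchingMap_ι X a f x).symm.trans (hz.trans (latchingMap_ι X a g y)))
  have hc : ¬ IsIso (u ≫ f.obj.hom) := (IObj.not_isIso_iff_lt _).2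
    ((IObj.n_le_of_hom u).trans_lt ((IObj.not_isIso_iff_lt _).1 f.property))
  let c : boundaryOver a := ⟨Over.mk (u ≫ f.obj.hom), hc⟩
  exact (Limits.Types.colimit_sound (ObjectProperty.homMk (Over.homMk u) : c ⟶ f) rfl).symm.trans
    (Limits.Types.colimit_sound (ObjectProperty.homMk (Over.homMk v huv.symm) : c ⟶ g) rfl)
end
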